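/- Dual reformulation of the distributionally robust CVaR constraint (Proposition 2). Let Ξ be a compact metric space, φ : Ξ → H continuous, ε > 0, α ∈ (0,1), and let f(x,·) : Ξ → ℝ be Borel measurable, bounded on Ξ, and lower semicontinuous. Then sup_{P∈𝒫} CVaR_{1−α}^P[f(x,·)] ≤ 0 holds if and only if there exist t, g₀ ∈ ℝ and g ∈ H such that (i) g₀ + (1/N)∑_{i=1}^N ⟨g, φ(ξ_i)⟩_H + ε‖g‖_H ≤ tα, and (ii) (f(x,ξ)+t)_+ ≤ g₀ + ⟨g, φ(ξ)⟩_H for every ξ ∈ Ξ. Moreover, sup_{P∈𝒫} CVaR_{1−α}^P[f(x,·)] equals the minimum over all (t, g₀, g) ∈ ℝ × ℝ × H satisfying (ii) of g₀ + (1/N)∑_{i=1}^N ⟨g, φ(ξ_i)⟩_H + ε‖g‖_H − tα. -/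

import Mathlib

/-!
Weak duality: integrating the constraint `(f + t)_+ ≤ g₀ + ⟪g, φ⟫` against `P` bounds
`CVaR_{1-α}^P[f]` by `g₀ + ⟪g, μ_P⟫ - tα`, and `⟪g, μ_P - μ_{P̂_N}⟫ ≤ ε ‖g‖` on the ambiguity set.

Strong duality: since `P ↦ CVaR^P` is concave, the pairs `(μ_P, s)` with `s ≤ CVaR^P` form a
convex subset of `H × ℝ`, disjoint from the open cylinder `B(μ_{P̂_N}, ε) × (S, ∞)` where `S` is the
worst-case CVaR. Hahn–Banach separation gives an affine majorant `⟪g, μ_P⟫ + c` of `CVaR^P` with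
`c + ⟪g, μ_{P̂_N}⟫ + ε ‖g‖ ≤ S`. Testing it on the mixtures `(1 - α) δ_ξ₁ + α δ_ξ₂` and
minimising the convex function `t ↦ sup_ξ ((f ξ + t)_+ - ⟪g, φ ξ⟫) - tα` yields `t` and `g₀` with
`(f + t)_+ ≤ g₀ + ⟪g, φ⟫` and `g₀ - tα ≤ c`.
-/

open MeasureTheory RealInnerProductSpace Set Filter Metric

section LeastIntercept

variable {ι : Type*} {f b : ι → ℝ}

/-- The least `g₀` with `max (f i + t) 0 ≤ g₀ + b i` for every `i`. -/
noncomputable def leastIntercept (f b : ι → ℝ) (t : ℝ) : ℝ :=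
  ⨆ i, (max (f i + t) 0 - b i)

theorem bddAbove_range_max_add_sub (hf : BddAbove (range f)) (hb : BddBelow (range b)) (t : ℝ) :
    BddAbove (range fun i => max (f i + t) 0 - b i) := by
  obtain ⟨F, hF⟩ := hf
  obtain ⟨B, hB⟩ := hb
  refine ⟨max (F + t) 0 - B, ?_⟩
  rintro _ ⟨i, rfl⟩
  have hfi : f i ≤ F := hF ⟨i, rfl⟩
  exact sub_le_sub (max_le_max (by linarith) le_rfl) (hB ⟨i, rfl⟩)

theorem max_add_le_leastIntercept_add (hf : BddAbove (range f)) (hb : BddBelow (range b))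
    (i : ι) (t : ℝ) : max (f i + t) 0 ≤ leastIntercept f b t + b i := by
  have := le_ciSup (bddAbove_range_max_add_sub hf hb t) i
  rw [leastIntercept]
  linarith

theorem lipschitzWith_leastIntercept [Nonempty ι] (hf : BddAbove (range f))
    (hb : BddBelow (range b)) : LipschitzWith 1 (leastIntercept f b) := by
  refine LipschitzWith.of_le_add fun t s => ciSup_le fun i => ?_
  have hmax : max (f i + t) 0 ≤ max (f i + s) 0 + dist t s := by
    have := (abs_le.mp (abs_max_sub_max_le_abs (f i + t) (f i + s) 0)).2
    rw [add_sub_add_left_eq_sub] at this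
    rw [Real.dist_eq]
    linarith
  linarith [max_add_le_leastIntercept_add hf hb i s]

theorem exists_forall_leastIntercept_sub_mul_le [Nonempty ι] (hf : BddAbove (range f))
    (hb : BddBelow (range b)) {α : ℝ} (hα : α ∈ Ioo 0 1) :
    ∃ t₀, ∀ t, leastIntercept f b t₀ - t₀ * α ≤ leastIntercept f b t - t * α := by
  obtain ⟨i⟩ := ‹Nonempty ι›
  have hle (t : ℝ) : max (f i + t) 0 - b i ≤ leastIntercept f b t := by
    linarith [max_add_le_leastIntercept_add hf hb i t]
  have hcont : Continuous fun t => leastIntercept f b t - t * α :=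
    (lipschitzWith_leastIntercept hf hb).continuous.sub (continuous_id.mul continuous_const)
  refine hcont.exists_forall_le ?_
  rw [cocompact_eq_atBot_atTop, tendsto_sup]
  constructor
  · refine tendsto_atTop_mono (fun t => ?_)
      (tendsto_atTop_add_const_left _ (-b i) (tendsto_neg_atBot_atTop.atTop_mul_const hα.1))
    linarith [hle t, le_max_right (f i + t) 0]
  · refine tendsto_atTop_mono (fun t => ?_)
      (tendsto_atTop_add_const_left _ (f i - b i) (tendsto_id.atTop_mul_const (sub_pos.2 hα.2)))
    rw [id]
    linarith [hle t, le_max_left (f i + t) 0]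

theorem exists_feasible_of_forall_twoPoint [Nonempty ι] (hf : BddAbove (range f))
    (hb : BddBelow (range b)) {α c : ℝ} (hα : α ∈ Ioo 0 1)
    (h : ∀ i j, ⨅ t, ((1 - α) * max (f i + t) 0 + α * max (f j + t) 0 - t * α)
      ≤ (1 - α) * b i + α * b j + c) :
    ∃ t₀ g₀, (∀ i, max (f i + t₀) 0 ≤ g₀ + b i) ∧ g₀ - t₀ * α ≤ c := by
  obtain ⟨t₀, ht₀⟩ := exists_forall_leastIntercept_sub_mul_le hf hb hα
  obtain ⟨hα0, hα1⟩ := hα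
  refine ⟨t₀, leastIntercept f b t₀, fun i => max_add_le_leastIntercept_add hf hb i t₀, ?_⟩
  set L := leastIntercept f b
  by_contra! hc
  set δ := L t₀ - t₀ * α - c
  have hδ : 0 < δ := by linarith
  set η := α * (1 - α) * δ
  have hηα : η < α * δ := by nlinarith [mul_pos hα0 hδ]
  have hη1α : η < (1 - α) * δ := by nlinarith [mul_pos (sub_pos.2 hα1) hδ]
  have hη : 0 < η := by positivity
  obtain ⟨i, hi⟩ := exists_lt_of_lt_ciSup (show L (t₀ - δ) - η < L (t₀ - δ) by linarith)
  obtain ⟨j, hj⟩ := exists_lt_of_lt_ciSup (show L (t₀ + δ) - η < L (t₀ + δ) by linarith)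
  -- by minimality of `t₀`, the near-maximiser at `t₀ - δ` sits on the flat part of its hinge,
  -- the one at `t₀ + δ` on the sloped part
  have hi0 : f i + (t₀ - δ) ≤ 0 := by
    by_contra! hpos
    have := max_add_le_leastIntercept_add hf hb i t₀
    rw [max_eq_left hpos.le] at hi
    rw [max_eq_left (by linarith)] at this
    linarith [ht₀ (t₀ - δ)]
  have hj0 : 0 ≤ f j + (t₀ + δ) := by
    by_contra! hneg
    have := max_add_le_leastIntercept_add hf hb j t₀
    rw [max_eq_right hneg.le] at hj
    linarith [ht₀ (t₀ + δ), le_max_right (f j + t₀) 0]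
  rw [max_eq_right hi0] at hi
  rw [max_eq_left hj0] at hj
  have hmix : α * f j ≤ (1 - α) * b i + α * b j + c := by
    refine (le_ciInf fun t => ?_).trans (h i j)
    nlinarith [le_max_right (f i + t) 0, le_max_left (f j + t) 0]
  have h3η : 3 * η < δ := by nlinarith [sq_nonneg (2 * α - 1)]
  have e1 := mul_lt_mul_of_pos_left hi (sub_pos.2 hα1)
  have e2 := mul_lt_mul_of_pos_left hj hα0
  have e3 := mul_le_mul_of_nonneg_left (ht₀ (t₀ - δ)) (sub_pos.2 hα1).le
  have e4 := mul_le_mul_of_nonneg_left (ht₀ (t₀ + δ)) hα0.le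
  linarith

end LeastIntercept

section CVaR

variable {Ξ : Type*} [MeasurableSpace Ξ]

noncomputable def cvarObjective (f : Ξ → ℝ) (α : ℝ) (P : Measure Ξ) (t : ℝ) : ℝ :=
  ∫ ξ, max (f ξ + t) 0 ∂P - t * α

noncomputable def cvar (f : Ξ → ℝ) (α : ℝ) (P : Measure Ξ) : ℝ :=
  ⨅ t, cvarObjective f α P t

noncomputable def mixture (a b : ℝ) (P Q : Measure Ξ) : Measure Ξ :=
  ENNReal.ofReal a • P + ENNReal.ofReal b • Q

variable {f : Ξ → ℝ} {α : ℝ} {P Q : Measure Ξ}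

theorem integrable_of_abs_le [IsFiniteMeasure P] (hf : Measurable f) {M : ℝ}
    (hfM : ∀ ξ, |f ξ| ≤ M) : Integrable f P :=
  Integrable.of_bound hf.aestronglyMeasurable M (ae_of_all _ hfM)

theorem MeasureTheory.Integrable.max_add_const_zero [IsFiniteMeasure P] (hf : Integrable f P)
    (t : ℝ) :
    Integrable (fun ξ => max (f ξ + t) 0) P :=
  (hf.add (integrable_const t)).pos_part

theorem mul_integral_le_cvarObjective [IsProbabilityMeasure P] (hα : α ∈ Icc 0 1)
    (hf : Integrable f P) (t : ℝ) : α * ∫ ξ, f ξ ∂P ≤ cvarObjective f α P t := by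
  have hpoint (ξ : Ξ) : α * (f ξ + t) ≤ max (f ξ + t) 0 := by
    rcases le_total 0 (f ξ + t) with h | h
    · nlinarith [hα.2, le_max_left (f ξ + t) 0]
    · nlinarith [hα.1, le_max_right (f ξ + t) 0]
  have hint : ∫ ξ, α * (f ξ + t) ∂P ≤ ∫ ξ, max (f ξ + t) 0 ∂P :=
    integral_mono ((hf.add (integrable_const t)).const_mul α) (hf.max_add_const_zero t) hpoint
  rw [integral_const_mul, integral_add hf (integrable_const t), integral_const] at hint
  simp only [probReal_univ, smul_eq_mul, one_mul] at hint
  rw [cvarObjective]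
  linarith

theorem cvar_le_cvarObjective [IsProbabilityMeasure P] (hα : α ∈ Icc 0 1)
    (hf : Integrable f P) (t : ℝ) : cvar f α P ≤ cvarObjective f α P t :=
  ciInf_le ⟨_, by rintro _ ⟨s, rfl⟩; exact mul_integral_le_cvarObjective hα hf s⟩ t

theorem isProbabilityMeasure_mixture [IsProbabilityMeasure P] [IsProbabilityMeasure Q]
    {a b : ℝ} (ha : 0 ≤ a) (hb : 0 ≤ b) (hab : a + b = 1) :
    IsProbabilityMeasure (mixture a b P Q) := by
  constructor
  simp only [mixture, Measure.add_apply, Measure.smul_apply, measure_univ, smul_eq_mul, mul_one]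
  rw [← ENNReal.ofReal_add ha hb, hab, ENNReal.ofReal_one]

theorem integral_mixture {E : Type*} [NormedAddCommGroup E] [NormedSpace ℝ E] {u : Ξ → E}
    (hP : Integrable u P) (hQ : Integrable u Q) {a b : ℝ} (ha : 0 ≤ a) (hb : 0 ≤ b) :
    ∫ ξ, u ξ ∂(mixture a b P Q) = a • ∫ ξ, u ξ ∂P + b • ∫ ξ, u ξ ∂Q := by
  rw [mixture, integral_add_measure (hP.smul_measure ENNReal.ofReal_ne_top)
    (hQ.smul_measure ENNReal.ofReal_ne_top), integral_smul_measure, integral_smul_measure,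
    ENNReal.toReal_ofReal ha, ENNReal.toReal_ofReal hb]

theorem integral_mixture_dirac {E : Type*} [NormedAddCommGroup E] [NormedSpace ℝ E]
    [CompleteSpace E] {u : Ξ → E} (hu : StronglyMeasurable u) (x y : Ξ) {a b : ℝ} (ha : 0 ≤ a)
    (hb : 0 ≤ b) :
    ∫ ξ, u ξ ∂(mixture a b (Measure.dirac x) (Measure.dirac y)) = a • u x + b • u y := by
  rw [integral_mixture (integrable_dirac' hu enorm_lt_top) (integrable_dirac' hu enorm_lt_top)
    ha hb, integral_dirac' u x hu, integral_dirac' u y hu]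

theorem mul_cvar_add_mul_cvar_le_cvar_mixture [IsProbabilityMeasure P] [IsProbabilityMeasure Q]
    (hα : α ∈ Icc 0 1) (hfP : Integrable f P) (hfQ : Integrable f Q) {a b : ℝ} (ha : 0 ≤ a)
    (hb : 0 ≤ b) (hab : a + b = 1) :
    a * cvar f α P + b * cvar f α Q ≤ cvar f α (mixture a b P Q) := by
  refine le_ciInf fun t => ?_
  have hsplit : cvarObjective f α (mixture a b P Q) t
      = a * cvarObjective f α P t + b * cvarObjective f α Q t := by
    simp only [cvarObjective]
    rw [integral_mixture (hfP.max_add_const_zero t) (hfQ.max_add_const_zero t) ha hb]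
    simp only [smul_eq_mul]
    linear_combination (t * α) * hab
  rw [hsplit]
  gcongr <;> exact cvar_le_cvarObjective hα ‹_› t

theorem cvar_mixture_dirac (hf : Measurable f) (x y : Ξ) {a b : ℝ} (ha : 0 ≤ a) (hb : 0 ≤ b) :
    cvar f α (mixture a b (Measure.dirac x) (Measure.dirac y))
      = ⨅ t, (a * max (f x + t) 0 + b * max (f y + t) 0 - t * α) := by
  refine iInf_congr fun t => ?_
  rw [cvarObjective, integral_mixture_dirac
    ((hf.add_const t).max measurable_const).stronglyMeasurable x y ha hb, smul_eq_mul, smul_eq_mul]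

end CVaR

section Separation

variable {H : Type*} [NormedAddCommGroup H] [InnerProductSpace ℝ H]

theorem exists_mem_closedBall_inner_eq (w m : H) {ε : ℝ} (hε : 0 ≤ ε) :
    ∃ x ∈ closedBall m ε, ⟪w, x⟫ = ⟪w, m⟫ + ε * ‖w‖ := by
  rcases eq_or_ne w 0 with rfl | hw
  · exact ⟨m, mem_closedBall_self hε, by simp⟩
  refine ⟨m + (ε * ‖w‖⁻¹) • w, ?_, ?_⟩
  · rw [mem_closedBall, dist_eq_norm, add_sub_cancel_left, norm_smul, Real.norm_eq_abs,
      abs_of_nonneg (by positivity), mul_assoc, inv_mul_cancel₀ (norm_ne_zero_iff.mpr hw),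
      mul_one]
  · rw [inner_add_right, real_inner_smul_right, real_inner_self_eq_norm_mul_norm]
    field_simp

theorem exists_inner_add_mul_eq [CompleteSpace H] (F : H × ℝ →L[ℝ] ℝ) :
    ∃ (w : H) (β : ℝ), ∀ x s, F (x, s) = ⟪w, x⟫ + s * β := by
  refine ⟨(InnerProductSpace.toDual ℝ H).symm (F.comp (.inl ℝ H ℝ)), F (0, 1), fun x s => ?_⟩
  rw [InnerProductSpace.toDual_symm_apply, ContinuousLinearMap.comp_apply,
    ContinuousLinearMap.inl_apply, ← smul_eq_mul, ← F.map_smul, ← F.map_add]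
  simp

theorem Convex.exists_affine_majorant [CompleteSpace H] {C : Set (H × ℝ)} (hC : Convex ℝ C)
    {m : H} {ε S : ℝ} (hC₀ : ∃ p ∈ C, p.1 ∈ ball m ε) (hS : ∀ p ∈ C, p.1 ∈ ball m ε → p.2 ≤ S) :
    ∃ (g : H) (c : ℝ), (∀ p ∈ C, p.2 ≤ ⟪g, p.1⟫ + c) ∧ c + ⟪g, m⟫ + ε * ‖g‖ ≤ S := by
  obtain ⟨p₀, hp₀C, hp₀m⟩ := hC₀
  have hε : 0 < ε := pos_of_mem_ball hp₀m
  have hdisj : Disjoint (ball m ε ×ˢ Ioi S) C := by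
    refine Set.disjoint_left.mpr fun p hpB hpC => ?_
    exact (hS p hpC (mem_prod.mp hpB).1).not_gt (mem_prod.mp hpB).2
  obtain ⟨F, u, hFB, hFC⟩ := geometric_hahn_banach_open ((convex_ball m ε).prod (convex_Ioi S))
    (isOpen_ball.prod isOpen_Ioi) hC hdisj
  obtain ⟨w, β, hF⟩ := exists_inner_add_mul_eq F
  have hFB' : ∀ x ∈ closedBall m ε, ∀ s, S ≤ s → ⟪w, x⟫ + s * β ≤ u := by
    intro x hx s hs
    have hsub : closure (ball m ε ×ˢ Ioi S) ⊆ {p | F p ≤ u} :=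
      closure_minimal (fun p hp => (hFB p hp).le) (isClosed_le F.continuous continuous_const)
    rw [closure_prod_eq, closure_ball m hε.ne', closure_Ioi] at hsub
    simpa [hF] using hsub (mk_mem_prod hx hs)
  have hβ : β < 0 := by
    have hne : β ≠ 0 := by
      rintro rfl
      have hstrict := hFB (p₀.1, S + 1) (mk_mem_prod hp₀m (by simp))
      have hp₀ := hFC p₀ hp₀C
      simp only [hF, mul_zero, add_zero] at hstrict hp₀
      linarith
    refine hne.lt_or_gt.resolve_right fun hpos => ?_
    -- `s ↦ ⟪w, m⟫ + s * β` is unbounded above on `[S, ∞)` when `β > 0`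
    set s := max S ((u - ⟪w, m⟫) / β + 1)
    have hs := hFB' m (mem_closedBall_self hε.le) s (le_max_left _ _)
    have hsβ : ((u - ⟪w, m⟫) / β + 1) * β ≤ s * β :=
      mul_le_mul_of_nonneg_right (le_max_right _ _) hpos.le
    rw [add_mul, div_mul_cancel₀ _ hne] at hsβ
    linarith
  obtain ⟨x, hx, hwx⟩ := exists_mem_closedBall_inner_eq w m hε.le
  refine ⟨(-β)⁻¹ • w, u / β, fun p hp => ?_, ?_⟩
  · have hp := hFC p hp
    rw [hF] at hp
    rw [real_inner_smul_left, show (-β)⁻¹ * ⟪w, p.1⟫ + u / β = (⟪w, p.1⟫ - u) / -β by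
      field_simp; ring, le_div_iff₀ (neg_pos.2 hβ)]
    linarith
  · have hxS := hFB' x hx S le_rfl
    rw [real_inner_smul_left, norm_smul, Real.norm_eq_abs, abs_of_pos (inv_pos.2 (neg_pos.2 hβ)),
      show u / β + (-β)⁻¹ * ⟪w, m⟫ + ε * ((-β)⁻¹ * ‖w‖) = (⟪w, m⟫ + ε * ‖w‖ - u) / -β by
        field_simp; ring, div_le_iff₀ (neg_pos.2 hβ)]
    linarith

end Separation

section Duality

variable {Ξ : Type*} [MeasurableSpace Ξ] {H : Type*} [NormedAddCommGroup H]
  [InnerProductSpace ℝ H] {φ : Ξ → H} {f : Ξ → ℝ} {α : ℝ}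

def cvarHypograph (φ : Ξ → H) (f : Ξ → ℝ) (α : ℝ) : Set (H × ℝ) :=
  {p | ∃ P : Measure Ξ, IsProbabilityMeasure P ∧ p.1 = ∫ ξ, φ ξ ∂P ∧ p.2 ≤ cvar f α P}

theorem convex_cvarHypograph (hφ : StronglyMeasurable φ) {K : ℝ} (hφK : ∀ ξ, ‖φ ξ‖ ≤ K)
    (hf : Measurable f) {M : ℝ} (hfM : ∀ ξ, |f ξ| ≤ M) (hα : α ∈ Icc 0 1) :
    Convex ℝ (cvarHypograph φ f α) := by
  rintro ⟨x, r⟩ ⟨P, hP, hx : x = _, hr : r ≤ _⟩ ⟨y, s⟩ ⟨Q, hQ, hy : y = _, hs : s ≤ _⟩ a b ha hb hab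
  have hφint (R : Measure Ξ) [IsFiniteMeasure R] : Integrable φ R :=
    Integrable.of_bound hφ.aestronglyMeasurable K (ae_of_all _ hφK)
  have := isProbabilityMeasure_mixture (P := P) (Q := Q) ha hb hab
  refine ⟨mixture a b P Q, ‹_›, ?_, ?_⟩
  · simp [hx, hy, integral_mixture (hφint P) (hφint Q) ha hb]
  calc a * r + b * s ≤ a * cvar f α P + b * cvar f α Q := by gcongr
    _ ≤ _ := mul_cvar_add_mul_cvar_le_cvar_mixture hα (integrable_of_abs_le hf hfM)
      (integrable_of_abs_le hf hfM) ha hb hab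

variable [CompleteSpace H] {m : H} {ε : ℝ}

theorem cvar_le_of_feasible {P : Measure Ξ} [IsProbabilityMeasure P] (hα : α ∈ Icc 0 1)
    (hf : Integrable f P) (hφ : Integrable φ P) (hP : ‖∫ ξ, φ ξ ∂P - m‖ ≤ ε) {t g₀ : ℝ} {g : H}
    (hfeas : ∀ ξ, max (f ξ + t) 0 ≤ g₀ + ⟪g, φ ξ⟫) :
    cvar f α P ≤ g₀ + ⟪g, m⟫ + ε * ‖g‖ - t * α := by
  have hmean : ∫ ξ, max (f ξ + t) 0 ∂P ≤ g₀ + ⟪g, ∫ ξ, φ ξ ∂P⟫ :=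
    calc ∫ ξ, max (f ξ + t) 0 ∂P ≤ ∫ ξ, (g₀ + ⟪g, φ ξ⟫) ∂P :=
          integral_mono (hf.max_add_const_zero t) ((integrable_const g₀).add (hφ.const_inner g))
            hfeas
      _ = g₀ + ⟪g, ∫ ξ, φ ξ ∂P⟫ := by
          rw [integral_add (integrable_const g₀) (hφ.const_inner g), integral_inner hφ]
          simp
  have hball : ⟪g, ∫ ξ, φ ξ ∂P⟫ ≤ ⟪g, m⟫ + ε * ‖g‖ := by
    have := real_inner_le_norm g (∫ ξ, φ ξ ∂P - m)
    rw [inner_sub_right] at this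
    linarith [mul_le_mul_of_nonneg_left hP (norm_nonneg g)]
  have := cvar_le_cvarObjective hα hf t
  rw [cvarObjective] at this
  linarith

theorem exists_feasible_le_of_forall_cvar_le (hφ : StronglyMeasurable φ) {K : ℝ}
    (hφK : ∀ ξ, ‖φ ξ‖ ≤ K) (hf : Measurable f) {M : ℝ} (hfM : ∀ ξ, |f ξ| ≤ M)
    (hα : α ∈ Ioo 0 1) {S : ℝ}
    (hS : ∀ P : Measure Ξ, IsProbabilityMeasure P → ‖∫ ξ, φ ξ ∂P - m‖ ≤ ε → cvar f α P ≤ S)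
    (P₀ : Measure Ξ) [IsProbabilityMeasure P₀] (hP₀ : ‖∫ ξ, φ ξ ∂P₀ - m‖ < ε) :
    ∃ (t g₀ : ℝ) (g : H), (∀ ξ, max (f ξ + t) 0 ≤ g₀ + ⟪g, φ ξ⟫) ∧
      g₀ + ⟪g, m⟫ + ε * ‖g‖ - t * α ≤ S := by
  have := nonempty_of_isProbabilityMeasure P₀
  obtain ⟨g, c, hgc, hcS⟩ :=
    (convex_cvarHypograph hφ hφK hf hfM (Ioo_subset_Icc_self hα)).exists_affine_majorant
      (m := m) (ε := ε) (S := S)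
      ⟨(∫ ξ, φ ξ ∂P₀, cvar f α P₀), ⟨P₀, ‹_›, rfl, le_rfl⟩, by rwa [mem_ball, dist_eq_norm]⟩
      (by
        rintro ⟨_, r⟩ ⟨P, hP, rfl, hr : r ≤ _⟩ hball
        rw [mem_ball, dist_eq_norm] at hball
        exact hr.trans (hS P hP hball.le))
  have htwo (x y : Ξ) : ⨅ t, ((1 - α) * max (f x + t) 0 + α * max (f y + t) 0 - t * α)
      ≤ (1 - α) * ⟪g, φ x⟫ + α * ⟪g, φ y⟫ + c := by
    have h1α : 0 ≤ 1 - α := sub_nonneg.2 hα.2.le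
    have := isProbabilityMeasure_mixture (P := Measure.dirac x) (Q := Measure.dirac y) h1α hα.1.le
      (by ring)
    have := hgc (_, cvar f α _)
      ⟨mixture (1 - α) α (Measure.dirac x) (Measure.dirac y), ‹_›, rfl, le_rfl⟩
    rwa [cvar_mixture_dirac hf x y h1α hα.1.le, integral_mixture_dirac hφ x y h1α hα.1.le,
      inner_add_right, real_inner_smul_right, real_inner_smul_right] at this
  have hfbdd : BddAbove (range f) :=
    ⟨M, by rintro _ ⟨ξ, rfl⟩; exact (abs_le.mp (hfM ξ)).2⟩
  have hgbdd : BddBelow (range fun ξ => ⟪g, φ ξ⟫) := by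
    refine ⟨-(‖g‖ * K), ?_⟩
    rintro _ ⟨ξ, rfl⟩
    have := (abs_le.mp (abs_real_inner_le_norm g (φ ξ))).1
    linarith [mul_le_mul_of_nonneg_left (hφK ξ) (norm_nonneg g)]
  obtain ⟨t, g₀, hfeas, hval⟩ := exists_feasible_of_forall_twoPoint hfbdd hgbdd hα htwo
  exact ⟨t, g₀, g, hfeas, by linarith⟩

theorem isLeast_dual_value_sSup_cvar (hφ : StronglyMeasurable φ) {K : ℝ} (hφK : ∀ ξ, ‖φ ξ‖ ≤ K)
    (hf : Measurable f) {M : ℝ} (hfM : ∀ ξ, |f ξ| ≤ M) (hα : α ∈ Ioo 0 1)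
    (P₀ : Measure Ξ) [IsProbabilityMeasure P₀] (hP₀ : ‖∫ ξ, φ ξ ∂P₀ - m‖ < ε) :
    IsLeast {v | ∃ (t g₀ : ℝ) (g : H), (∀ ξ, max (f ξ + t) 0 ≤ g₀ + ⟪g, φ ξ⟫) ∧
        v = g₀ + ⟪g, m⟫ + ε * ‖g‖ - t * α}
      (sSup {r | ∃ P : Measure Ξ, IsProbabilityMeasure P ∧ ‖∫ ξ, φ ξ ∂P - m‖ ≤ ε ∧
        r = cvar f α P}) := by
  set 𝒮 := {r | ∃ P : Measure Ξ, IsProbabilityMeasure P ∧ ‖∫ ξ, φ ξ ∂P - m‖ ≤ ε ∧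
    r = cvar f α P}
  have hweak {t g₀ : ℝ} {g : H} (hfeas : ∀ ξ, max (f ξ + t) 0 ≤ g₀ + ⟪g, φ ξ⟫) :
      ∀ r ∈ 𝒮, r ≤ g₀ + ⟪g, m⟫ + ε * ‖g‖ - t * α := by
    rintro _ ⟨P, hP, hPm, rfl⟩
    exact cvar_le_of_feasible (Ioo_subset_Icc_self hα) (integrable_of_abs_le hf hfM)
      (Integrable.of_bound hφ.aestronglyMeasurable K (ae_of_all _ hφK)) hPm hfeas
  have hle_dual {t g₀ : ℝ} {g : H} (hfeas : ∀ ξ, max (f ξ + t) 0 ≤ g₀ + ⟪g, φ ξ⟫) :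
      sSup 𝒮 ≤ g₀ + ⟪g, m⟫ + ε * ‖g‖ - t * α :=
    csSup_le ⟨_, P₀, ‹_›, hP₀.le, rfl⟩ (hweak hfeas)
  have hbdd : BddAbove 𝒮 := by
    refine ⟨_, hweak (t := 0) (g₀ := M) (g := 0) fun ξ => ?_⟩
    rw [add_zero, inner_zero_left, add_zero]
    exact max_le (abs_le.mp (hfM ξ)).2 ((abs_nonneg _).trans (hfM ξ))
  obtain ⟨t, g₀, g, hfeas, hval⟩ := exists_feasible_le_of_forall_cvar_le hφ hφK hf hfM hα
    (fun P hP hPm => le_csSup hbdd ⟨P, hP, hPm, rfl⟩) P₀ hP₀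
  exact ⟨⟨t, g₀, g, hfeas, le_antisymm (hle_dual hfeas) hval⟩,
    fun _ ⟨_, _, _, hfeas', hv⟩ => hv ▸ hle_dual hfeas'⟩

end Duality

section Empirical

variable {Ξ : Type*} [MeasurableSpace Ξ] {N : ℕ}

noncomputable def empiricalMeasure (ξs : Fin N → Ξ) : Measure Ξ :=
  (N : ENNReal)⁻¹ • ∑ i, Measure.dirac (ξs i)

theorem isProbabilityMeasure_empiricalMeasure (hN : 0 < N) (ξs : Fin N → Ξ) :
    IsProbabilityMeasure (empiricalMeasure ξs) := by
  constructor
  simp only [empiricalMeasure, Measure.smul_apply, Measure.finsetSum_apply, measure_univ,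
    Finset.sum_const, Finset.card_univ, Fintype.card_fin, nsmul_eq_mul, mul_one, smul_eq_mul]
  exact ENNReal.inv_mul_cancel (Nat.cast_ne_zero.mpr hN.ne') (ENNReal.natCast_ne_top N)

theorem integral_empiricalMeasure {E : Type*} [NormedAddCommGroup E] [NormedSpace ℝ E]
    [CompleteSpace E] {u : Ξ → E} (hu : StronglyMeasurable u) (ξs : Fin N → Ξ) :
    ∫ ξ, u ξ ∂(empiricalMeasure ξs) = (N : ℝ)⁻¹ • ∑ i, u (ξs i) := by
  rw [empiricalMeasure, integral_smul_measure,
    integral_finsetSum_measure fun i _ => integrable_dirac' hu enorm_lt_top]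
  simp [integral_dirac' _ _ hu, ENNReal.toReal_inv]

end Empirical

theorem dual_reformulation_DR_CVaR_general
    {Ξ : Type*} [MetricSpace Ξ] [CompactSpace Ξ] [MeasurableSpace Ξ] [BorelSpace Ξ]
    {H : Type*} [NormedAddCommGroup H] [InnerProductSpace ℝ H] [CompleteSpace H]
    (φ : Ξ → H) (hφ : Continuous φ)
    {N : ℕ} (hN : 0 < N) (ξs : Fin N → Ξ)
    (ε : ℝ) (hε : 0 < ε) (α : ℝ) (hα : α ∈ Set.Ioo (0 : ℝ) 1)
    (f : Ξ → ℝ) (hfm : Measurable f) (M : ℝ) (hfb : ∀ ξ, |f ξ| ≤ M) :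
    -- (1) the DR-CVaR constraint holds iff the dual program is feasible
    (sSup {r : ℝ | ∃ P : Measure Ξ, IsProbabilityMeasure P ∧
        ‖(∫ ξ, φ ξ ∂P) - (N : ℝ)⁻¹ • ∑ i, φ (ξs i)‖ ≤ ε ∧
        r = ⨅ t : ℝ, (∫ ξ, max (f ξ + t) 0 ∂P - t * α)} ≤ 0 ↔
      ∃ t : ℝ, ∃ g₀ : ℝ, ∃ g : H,
        g₀ + (N : ℝ)⁻¹ * ∑ i, ⟪g, φ (ξs i)⟫ + ε * ‖g‖ ≤ t * α ∧
        ∀ ξ : Ξ, max (f ξ + t) 0 ≤ g₀ + ⟪g, φ ξ⟫)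
    ∧
    -- (2) the worst-case CVaR equals the attained minimum of the dual program
    (∃ t : ℝ, ∃ g₀ : ℝ, ∃ g : H,
      (∀ ξ : Ξ, max (f ξ + t) 0 ≤ g₀ + ⟪g, φ ξ⟫) ∧
      g₀ + (N : ℝ)⁻¹ * ∑ i, ⟪g, φ (ξs i)⟫ + ε * ‖g‖ - t * α
        = sSup {r : ℝ | ∃ P : Measure Ξ, IsProbabilityMeasure P ∧
            ‖(∫ ξ, φ ξ ∂P) - (N : ℝ)⁻¹ • ∑ i, φ (ξs i)‖ ≤ ε ∧
            r = ⨅ s : ℝ, (∫ ξ, max (f ξ + s) 0 ∂P - s * α)} ∧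
      (∀ t' : ℝ, ∀ g₀' : ℝ, ∀ g' : H,
        (∀ ξ : Ξ, max (f ξ + t') 0 ≤ g₀' + ⟪g', φ ξ⟫) →
        g₀ + (N : ℝ)⁻¹ * ∑ i, ⟪g, φ (ξs i)⟫ + ε * ‖g‖ - t * α
          ≤ g₀' + (N : ℝ)⁻¹ * ∑ i, ⟪g', φ (ξs i)⟫ + ε * ‖g'‖ - t' * α)) := by
  obtain ⟨K, hK⟩ := (isCompact_range hφ.norm).bddAbove
  have hφm : StronglyMeasurable φ := hφ.stronglyMeasurable
  have := isProbabilityMeasure_empiricalMeasure hN ξs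
  obtain ⟨⟨t, g₀, g, hfeas, hval⟩, hmin⟩ :=
    isLeast_dual_value_sSup_cvar hφm (fun ξ => hK ⟨ξ, rfl⟩) hfm hfb hα (empiricalMeasure ξs)
      (by rwa [integral_empiricalMeasure hφm, sub_self, norm_zero])
  have hinner (g : H) : ⟪g, (N : ℝ)⁻¹ • ∑ i, φ (ξs i)⟫ = (N : ℝ)⁻¹ * ∑ i, ⟪g, φ (ξs i)⟫ := by
    rw [real_inner_smul_right, inner_sum]
  have hle {t' g₀' : ℝ} {g' : H} (hfeas' : ∀ ξ, max (f ξ + t') 0 ≤ g₀' + ⟪g', φ ξ⟫) :=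
    hinner g' ▸ hmin ⟨t', g₀', g', hfeas', rfl⟩
  rw [hinner] at hval
  refine ⟨⟨fun h => ⟨t, g₀, g, by linarith [hval.symm.trans_le h], hfeas⟩,
    fun ⟨t', g₀', g', hv, hfeas'⟩ => (hle hfeas').trans (by linarith)⟩,
    t, g₀, g, hfeas, hval.symm, fun t' g₀' g' hfeas' => hval ▸ hle hfeas'⟩

/-- Dual reformulation of the distributionally robust CVaR constraint (Proposition 2).
`f` plays the role of `f(x, ·)` for a fixed decision `x`, assumed Borel measurable,
bounded and lower semicontinuous on the compact metric space `Ξ`.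
`CVaR_{1-α}^P[f] = ⨅ t, (E_P[(f+t)_+] - tα)`; the MMD ambiguity set is the ball of
radius `ε` around the empirical measure of the sample `ξs`, measured via the kernel
mean embeddings `∫ φ dP` and `(1/N) ∑ i, φ (ξs i)`. -/
theorem dual_reformulation_DR_CVaR
    {Ξ : Type*} [MetricSpace Ξ] [CompactSpace Ξ] [MeasurableSpace Ξ] [BorelSpace Ξ]
    {H : Type*} [NormedAddCommGroup H] [InnerProductSpace ℝ H] [CompleteSpace H]
    (φ : Ξ → H) (hφ : Continuous φ)
    {N : ℕ} (hN : 0 < N) (ξs : Fin N → Ξ)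
    (ε : ℝ) (hε : 0 < ε) (α : ℝ) (hα : α ∈ Set.Ioo (0 : ℝ) 1)
    (f : Ξ → ℝ) (hfm : Measurable f) (M : ℝ) (hfb : ∀ ξ, |f ξ| ≤ M)
    (hflsc : LowerSemicontinuous f) :
    -- (1) the DR-CVaR constraint holds iff the dual program is feasible
    (sSup {r : ℝ | ∃ P : Measure Ξ, IsProbabilityMeasure P ∧
        ‖(∫ ξ, φ ξ ∂P) - (N : ℝ)⁻¹ • ∑ i, φ (ξs i)‖ ≤ ε ∧
        r = ⨅ t : ℝ, (∫ ξ, max (f ξ + t) 0 ∂P - t * α)} ≤ 0 ↔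
      ∃ t : ℝ, ∃ g₀ : ℝ, ∃ g : H,
        g₀ + (N : ℝ)⁻¹ * ∑ i, ⟪g, φ (ξs i)⟫ + ε * ‖g‖ ≤ t * α ∧
        ∀ ξ : Ξ, max (f ξ + t) 0 ≤ g₀ + ⟪g, φ ξ⟫)
    ∧
    -- (2) the worst-case CVaR equals the attained minimum of the dual program
    (∃ t : ℝ, ∃ g₀ : ℝ, ∃ g : H,
      (∀ ξ : Ξ, max (f ξ + t) 0 ≤ g₀ + ⟪g, φ ξ⟫) ∧
      g₀ + (N : ℝ)⁻¹ * ∑ i, ⟪g, φ (ξs i)⟫ + ε * ‖g‖ - t * α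
        = sSup {r : ℝ | ∃ P : Measure Ξ, IsProbabilityMeasure P ∧
            ‖(∫ ξ, φ ξ ∂P) - (N : ℝ)⁻¹ • ∑ i, φ (ξs i)‖ ≤ ε ∧
            r = ⨅ s : ℝ, (∫ ξ, max (f ξ + s) 0 ∂P - s * α)} ∧
      (∀ t' : ℝ, ∀ g₀' : ℝ, ∀ g' : H,
        (∀ ξ : Ξ, max (f ξ + t') 0 ≤ g₀' + ⟪g', φ ξ⟫) →
        g₀ + (N : ℝ)⁻¹ * ∑ i, ⟪g, φ (ξs i)⟫ + ε * ‖g‖ - t * α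
          ≤ g₀' + (N : ℝ)⁻¹ * ∑ i, ⟪g', φ (ξs i)⟫ + ε * ‖g'‖ - t' * α)) :=
  dual_reformulation_DR_CVaR_general φ hφ hN ξs ε hε α hα f hfm M hfb
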